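/- Suppose the vector diffusion wavelets built from Q' = P ⊗ I_d satisfy frame bounds A‖w‖₂² ≤ Σ_j ‖Ψ̃'_j w‖₂² + ‖Φ̃'_J w‖₂² ≤ B‖w‖₂² for all w ∈ ℝ^{nd}. Then the wavelets built from Q (with blocks P[i,j]·U_iU_j^⊤, U_i orthogonal) satisfy the same frame bounds: A‖w‖₂² ≤ Σ_j ‖Ψ̃_j w‖₂² + ‖Φ̃_J w‖₂² ≤ B‖w‖₂² for all w ∈ ℝ^{nd}. -/
import Mathlib

open Matrix Kronecker

section Aux

variable {n d : ℕ}

/-- Block-diagonal matrix with blocks `U i`. -/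
def blkV (U : Fin n → Matrix (Fin d) (Fin d) ℝ) :
    Matrix (Fin n × Fin d) (Fin n × Fin d) ℝ :=
  Matrix.of fun p q => if p.1 = q.1 then U p.1 p.2 q.2 else 0

lemma blkV_mul_transpose (U : Fin n → Matrix (Fin d) (Fin d) ℝ)
    (hU : ∀ i, U i * (U i)ᵀ = 1) : blkV U * (blkV U)ᵀ = 1 := by
  ext ⟨i, a⟩ ⟨j, b⟩
  simp only [Matrix.mul_apply, Matrix.transpose_apply, blkV, Matrix.of_apply,
    Fintype.sum_prod_type]
  rw [Finset.sum_eq_single i]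
  · by_cases hij : i = j
    · subst hij
      have := congrArg (fun M => M a b) (hU i)
      simp only [Matrix.mul_apply, Matrix.transpose_apply] at this
      simpa [Matrix.one_apply] using this
    · simp [hij, Ne.symm hij, Matrix.one_apply, Prod.ext_iff]
  · intro k _ hk
    simp [Ne.symm hk]
  · simp

lemma blkV_transpose_mul (U : Fin n → Matrix (Fin d) (Fin d) ℝ)
    (hU : ∀ i, (U i)ᵀ * U i = 1) : (blkV U)ᵀ * blkV U = 1 := by
  ext ⟨i, a⟩ ⟨j, b⟩
  simp only [Matrix.mul_apply, Matrix.transpose_apply, blkV, Matrix.of_apply,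
    Fintype.sum_prod_type]
  rw [Finset.sum_eq_single i]
  · by_cases hij : i = j
    · subst hij
      have := congrArg (fun M => M a b) (hU i)
      simp only [Matrix.mul_apply, Matrix.transpose_apply] at this
      simpa [Matrix.one_apply] using this
    · simp [hij, Ne.symm hij, Matrix.one_apply, Prod.ext_iff]
  · intro k _ hk
    simp [hk]
  · simp

lemma norm_mulVec_of_orth (W : Matrix (Fin n × Fin d) (Fin n × Fin d) ℝ)
    (hW : Wᵀ * W = 1) (v : Fin n × Fin d → ℝ) :
    ∑ z, (W.mulVec v z) ^ 2 = ∑ z, (v z) ^ 2 := by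
  have h1 : ∑ z, (W.mulVec v z) ^ 2 = (W.mulVec v) ⬝ᵥ (W.mulVec v) := by
    simp [dotProduct, sq]
  have h2 : (W.mulVec v) ⬝ᵥ (W.mulVec v) = v ⬝ᵥ v := by
    rw [Matrix.dotProduct_mulVec, ← Matrix.mulVec_transpose, Matrix.mulVec_mulVec, hW,
      Matrix.one_mulVec]
  rw [h1, h2]; simp [dotProduct, sq]

end Aux

/-- Frame bounds transfer from the wavelets built from `Q' = P ⊗ I_d` to the wavelets built
from the vector diffusion matrix `Q` (blocks `P[i,j] U_i U_jᵀ`, `U_i` orthogonal). -/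
theorem vector_wavelet_frame_transfer (n d J : ℕ)
    (P : Matrix (Fin n) (Fin n) ℝ) (U : Fin n → Matrix (Fin d) (Fin d) ℝ)
    (hU : ∀ i, U i * (U i)ᵀ = 1 ∧ (U i)ᵀ * U i = 1)
    (Q : Matrix (Fin n × Fin d) (Fin n × Fin d) ℝ)
    (hQ : ∀ i j a b, Q (i, a) (j, b) = P i j * (U i * (U j)ᵀ) a b)
    (Q' : Matrix (Fin n × Fin d) (Fin n × Fin d) ℝ)
    (hQ' : Q' = P ⊗ₖ (1 : Matrix (Fin d) (Fin d) ℝ))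
    (A B : ℝ)
    (hframe : ∀ w : Fin n × Fin d → ℝ,
      A * ∑ z, (w z) ^ 2 ≤
        (∑ j ∈ Finset.range (J + 1),
          ∑ z, ((if j = 0 then 1 - Q' else Q' ^ 2 ^ (j - 1) - Q' ^ 2 ^ j).mulVec w z) ^ 2) +
          ∑ z, ((Q' ^ 2 ^ J).mulVec w z) ^ 2 ∧
      (∑ j ∈ Finset.range (J + 1),
          ∑ z, ((if j = 0 then 1 - Q' else Q' ^ 2 ^ (j - 1) - Q' ^ 2 ^ j).mulVec w z) ^ 2) +
          ∑ z, ((Q' ^ 2 ^ J).mulVec w z) ^ 2 ≤ B * ∑ z, (w z) ^ 2) :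
    ∀ w : Fin n × Fin d → ℝ,
      A * ∑ z, (w z) ^ 2 ≤
        (∑ j ∈ Finset.range (J + 1),
          ∑ z, ((if j = 0 then 1 - Q else Q ^ 2 ^ (j - 1) - Q ^ 2 ^ j).mulVec w z) ^ 2) +
          ∑ z, ((Q ^ 2 ^ J).mulVec w z) ^ 2 ∧
      (∑ j ∈ Finset.range (J + 1),
          ∑ z, ((if j = 0 then 1 - Q else Q ^ 2 ^ (j - 1) - Q ^ 2 ^ j).mulVec w z) ^ 2) +
          ∑ z, ((Q ^ 2 ^ J).mulVec w z) ^ 2 ≤ B * ∑ z, (w z) ^ 2 := by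
  classical
  intro w
  set V := blkV U with hVdef
  have hVVt : V * Vᵀ = 1 := blkV_mul_transpose U fun i => (hU i).1
  have hVtV : Vᵀ * V = 1 := blkV_transpose_mul U fun i => (hU i).2
  have hVapp : ∀ p q : Fin n × Fin d, V p q = if p.1 = q.1 then U p.1 p.2 q.2 else 0 :=
    fun p q => rfl
  -- Q = V * Q' * Vᵀ
  have hVQ' : ∀ i a l e, (V * Q') (i, a) (l, e) = P i l * U i a e := by
    intro i a l e
    simp only [Matrix.mul_apply, Fintype.sum_prod_type, hVapp, hQ',
      Matrix.kroneckerMap_apply]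
    rw [Finset.sum_eq_single i]
    · simp [Matrix.one_apply, mul_ite, mul_comm]
    · intro k _ hk; simp [Ne.symm hk]
    · simp
  have hconj : Q = V * Q' * Vᵀ := by
    ext ⟨i, a⟩ ⟨j, b⟩
    rw [hQ i j a b]
    have : (V * Q' * Vᵀ) (i, a) (j, b)
        = ∑ l, ∑ e, (V * Q') (i, a) (l, e) * V (j, b) (l, e) := by
      simp [Matrix.mul_apply, Matrix.transpose_apply, Fintype.sum_prod_type]
    rw [this]
    rw [Finset.sum_eq_single j]
    · simp only [hVQ', hVapp]
      simp only [Matrix.mul_apply, Matrix.transpose_apply, Finset.mul_sum]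
      ring_nf
      simp [mul_comm, mul_assoc, mul_left_comm]
    · intro l _ hl
      simp [hVapp, Ne.symm hl, hVQ']
    · simp
  -- powers conjugate
  have hpow : ∀ k : ℕ, Q ^ k = V * Q' ^ k * Vᵀ := by
    intro k
    induction k with
    | zero => simp [hVVt]
    | succ m ih =>
        rw [pow_succ, pow_succ, ih, hconj]
        have h : V * Q' ^ m * Vᵀ * (V * Q' * Vᵀ) = V * Q' ^ m * (Vᵀ * V) * Q' * Vᵀ := by
          noncomm_ring
        rw [h, hVtV, mul_one]
        noncomm_ring
  -- each wavelet matrix conjugates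
  have hwav : ∀ j : ℕ,
      (if j = 0 then 1 - Q else Q ^ 2 ^ (j - 1) - Q ^ 2 ^ j)
        = V * (if j = 0 then 1 - Q' else Q' ^ 2 ^ (j - 1) - Q' ^ 2 ^ j) * Vᵀ := by
    intro j
    by_cases hj : j = 0
    · subst hj
      rw [if_pos rfl, if_pos rfl, hconj, mul_sub, sub_mul, mul_one, hVVt]
    · rw [if_neg hj, if_neg hj, hpow, hpow, mul_sub, sub_mul]
  -- transfer: apply frame bounds to w' = Vᵀ w
  set w' : Fin n × Fin d → ℝ := Vᵀ.mulVec w with hw'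
  have hVorth2 : (Vᵀ)ᵀ * Vᵀ = 1 := by rw [Matrix.transpose_transpose, hVVt]
  have hnormw : ∑ z, (w' z) ^ 2 = ∑ z, (w z) ^ 2 :=
    norm_mulVec_of_orth Vᵀ hVorth2 w
  have hkey : ∀ M : Matrix (Fin n × Fin d) (Fin n × Fin d) ℝ,
      ∑ z, ((V * M * Vᵀ).mulVec w z) ^ 2 = ∑ z, (M.mulVec w' z) ^ 2 := by
    intro M
    have : (V * M * Vᵀ).mulVec w = V.mulVec (M.mulVec w') := by
      rw [hw', Matrix.mulVec_mulVec, Matrix.mulVec_mulVec]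
    rw [this, norm_mulVec_of_orth V hVtV]
  obtain ⟨hlo, hhi⟩ := hframe w'
  have heq :
      (∑ j ∈ Finset.range (J + 1),
          ∑ z, ((if j = 0 then 1 - Q else Q ^ 2 ^ (j - 1) - Q ^ 2 ^ j).mulVec w z) ^ 2) +
          ∑ z, ((Q ^ 2 ^ J).mulVec w z) ^ 2
        = (∑ j ∈ Finset.range (J + 1),
          ∑ z, ((if j = 0 then 1 - Q' else Q' ^ 2 ^ (j - 1) - Q' ^ 2 ^ j).mulVec w' z) ^ 2) +
          ∑ z, ((Q' ^ 2 ^ J).mulVec w' z) ^ 2 := by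
    congr 1
    · refine Finset.sum_congr rfl fun j _ => ?_
      rw [hwav j, hkey]
    · rw [hpow, hkey]
  constructor
  · rw [heq, ← hnormw]; exact hlo
  · rw [heq, ← hnormw]; exact hhi
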